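/- Let (X,T) be a system admitting minimal subsystems X_i (i ∈ ℕ) whose union is dense in X, such that each (X_i,T) is disjoint from (X,T). Then for every x ∈ X, the orbit closure satisfies cl O(x,T) × cl O(x,T) ⊆ Q(X), where Q(X) is the regionally proximal relation; consequently the maximal equicontinuous factor of (X,T) consists solely of fixed points. -/

import Mathlib

open Set Filter TopologicalSpace

/-- The `n`-th iterate (n ∈ ℤ) of a homeomorphism. -/
def hIter {X : Type*} [TopologicalSpace X] (T : X ≃ₜ X) (n : ℤ) : X → X :=
  fun x => (T.toEquiv ^ n) x

/-- The full orbit {Tⁿ x : n ∈ ℤ} of a point. -/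
def orb {X : Type*} [TopologicalSpace X] (T : X ≃ₜ X) (x : X) : Set X :=
  Set.range fun n : ℤ => hIter T n x

/-- The orbit closure of a point. -/
def orbCl {X : Type*} [TopologicalSpace X] (T : X ≃ₜ X) (x : X) : Set X :=
  closure (orb T x)

/-- A system is minimal if it has no proper nonempty closed invariant subset. -/
def IsMinimalSys {X : Type*} [TopologicalSpace X] (T : X → X) : Prop :=
  ∀ A : Set X, IsClosed A → A.Nonempty → T '' A = A → A = Set.univ

/-- `J` is a joining of the subsystems `(K,T)` and `(L,S)`: a closed `T × S`-invariant
subset of `K ×ˢ L` projecting onto `K` and onto `L`. -/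
def IsJoiningOn {X Y : Type*} [TopologicalSpace X] [TopologicalSpace Y]
    (T : X → X) (S : Y → Y) (K : Set X) (L : Set Y) (J : Set (X × Y)) : Prop :=
  IsClosed J ∧ J ⊆ K ×ˢ L ∧ Prod.map T S '' J = J ∧
    Prod.fst '' J = K ∧ Prod.snd '' J = L

/-- The subsystems `(K,T)` and `(L,S)` are disjoint: their only joining is `K ×ˢ L`. -/
def DisjointOn {X Y : Type*} [TopologicalSpace X] [TopologicalSpace Y]
    (T : X → X) (S : Y → Y) (K : Set X) (L : Set Y) : Prop :=
  ∀ J : Set (X × Y), IsJoiningOn T S K L J → J = K ×ˢ L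

/-- `M` is a minimal subset (minimal subsystem) of (X,T). -/
def IsMinimalSubset {X : Type*} [TopologicalSpace X] (T : X ≃ₜ X) (M : Set X) : Prop :=
  IsClosed M ∧ M.Nonempty ∧ ⇑T '' M = M ∧
    ∀ B : Set X, IsClosed B → B.Nonempty → B ⊆ M → ⇑T '' B = B → B = M

/-- (a,b) is a regionally proximal pair. -/
def RPpair {X : Type*} [MetricSpace X] (T : X ≃ₜ X) (a b : X) : Prop :=
  ∃ (u v : ℕ → X) (n : ℕ → ℤ),
    Filter.Tendsto u Filter.atTop (nhds a) ∧
    Filter.Tendsto v Filter.atTop (nhds b) ∧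
    Filter.Tendsto (fun i => dist (hIter T (n i) (u i)) (hIter T (n i) (v i)))
      Filter.atTop (nhds 0)

/-!
Let `M` be a minimal set disjoint from `X` and `e > 0`, and let `U` be the `T × T`-orbit of
`{(p, r) : p ∈ M, d(p, r) < e}`. Padding `closure U` with `M × (π₂ U)ᶜ` makes its second
projection all of `X`, so it is a joining of `M` and `X`, hence equal to `M × X`. Thus
`closure U ⊇ M × π₂ U`, and `π₂ U` contains the `e`-neighbourhood of `M`. Given `x` and `q`,
take `m` in some `Xᵢ` close to `x` and apply this to `(T^q m, x)`: some common iterate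
`T^n` maps `e`-close points `p, r` close to `T^q m ≈ T^q x` and to `x` respectively. So
`(x, T^q x)` is regionally proximal, and since `Q(X)` is closed, so is every pair in the orbit
closure of `x`. A factor map to an equicontinuous system identifies regionally proximal
points, in particular `x` and `T x`.
-/

open Metric

section Iterates

variable {X : Type*} [TopologicalSpace X]

theorem hIter_eq_coe_zpow (T : X ≃ₜ X) (n : ℤ) : hIter T n = ⇑(T ^ n) := by
  let toPerm : (X ≃ₜ X) →* Equiv.Perm X := ⟨⟨Homeomorph.toEquiv, rfl⟩, fun _ _ => rfl⟩
  funext x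
  exact congrArg (· x) (map_zpow toPerm T n).symm

theorem hIter_zero (T : X ≃ₜ X) : hIter T 0 = id := by
  rw [hIter_eq_coe_zpow, zpow_zero]; rfl

theorem hIter_one (T : X ≃ₜ X) : hIter T 1 = T := by
  rw [hIter_eq_coe_zpow, zpow_one]

theorem hIter_add_apply (T : X ≃ₜ X) (m n : ℤ) (x : X) :
    hIter T (m + n) x = hIter T m (hIter T n x) := by
  simp only [hIter_eq_coe_zpow, zpow_add, Homeomorph.mul_apply]

theorem hIter_neg_apply_hIter (T : X ≃ₜ X) (n : ℤ) (x : X) : hIter T (-n) (hIter T n x) = x := by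
  rw [← hIter_add_apply, neg_add_cancel, hIter_zero, id]

theorem hIter_mem_of_image_eq {T : X ≃ₜ X} {M : Set X} (h : ⇑T '' M = M) (n : ℤ) {x : X}
    (hx : x ∈ M) : hIter T n x ∈ M := by
  suffices ⇑(T ^ n) '' M = M by
    rw [hIter_eq_coe_zpow, ← this]
    exact mem_image_of_mem _ hx
  have h_symm : ⇑T.symm '' M = M := by
    conv_lhs => rw [← h]
    exact T.symm_image_image M
  induction n using Int.induction_on with
  | zero => exact image_id M
  | succ n ih =>
    change (fun x => (T ^ (n : ℤ)) (T x)) '' M = M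
    rw [← image_image, h, ih]
  | pred n ih =>
    rw [zpow_sub_one]
    change (fun x => (T ^ (-n : ℤ)) (T.symm x)) '' M = M
    rw [← image_image, h_symm, ih]

theorem map_hIter_of_semiconj {Z : Type*} [TopologicalSpace Z] {T : X ≃ₜ X} {R : Z ≃ₜ Z}
    {φ : X → Z} (h : ∀ x, φ (T x) = R (φ x)) (n : ℤ) (x : X) :
    φ (hIter T n x) = hIter R n (φ x) := by
  rw [hIter_eq_coe_zpow, hIter_eq_coe_zpow]
  induction n using Int.induction_on generalizing x with
  | zero => rfl
  | succ n ih =>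
    change φ ((T ^ (n : ℤ)) (T x)) = (R ^ (n : ℤ)) (R (φ x))
    rw [ih, h]
  | pred n ih =>
    rw [zpow_sub_one, zpow_sub_one]
    change φ ((T ^ (-n : ℤ)) (T.symm x)) = (R ^ (-n : ℤ)) (R.symm (φ x))
    rw [ih, R.eq_symm_apply.mpr ((h _).symm.trans (congrArg φ (T.apply_symm_apply x)))]

theorem image_iUnion_image_eq_of_comp_eq {α : Type*} {f : ℤ → α → α} {g : α → α}
    (hf : ∀ n, g ∘ f n = f (n + 1)) (S : Set α) :
    g '' ⋃ n, f n '' S = ⋃ n, f n '' S := by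
  simp_rw [image_iUnion, ← image_comp, hf]
  exact (Equiv.addRight (1 : ℤ)).surjective.iUnion_comp (fun n => f n '' S)

end Iterates

section Joining

variable {X : Type*} [TopologicalSpace X] [CompactSpace X] [T2Space X] {T : X ≃ₜ X}
  {M : Set X} {U : Set (X × X)}

theorem isJoiningOn_closure_union_prod_compl (hM : IsMinimalSubset T M)
    (hUM : U ⊆ M ×ˢ univ) (hU : U.Nonempty) (hUinv : Prod.map T T '' U = U)
    (hUo : IsOpen (Prod.snd '' U)) :
    IsJoiningOn T T M univ (closure U ∪ M ×ˢ (Prod.snd '' U)ᶜ) := by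
  obtain ⟨hMc, ⟨m, hm⟩, hMinv, hMmin⟩ := hM
  set J := closure U ∪ M ×ˢ (Prod.snd '' U)ᶜ
  have hJc : IsClosed J := isClosed_closure.union (hMc.prod hUo.isClosed_compl)
  have hJM : J ⊆ M ×ˢ univ :=
    union_subset (closure_minimal hUM (hMc.prod isClosed_univ)) (prod_mono le_rfl (subset_univ _))
  have hsnd_inv : ⇑T '' (Prod.snd '' U) = Prod.snd '' U := by
    conv_rhs => rw [← hUinv]
    simp only [image_image, Prod.map_snd]
  have hJinv : Prod.map T T '' J = J := by
    rw [image_union, prodMap_image_prod, hMinv, image_compl_eq T.bijective, hsnd_inv]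
    congr 1
    exact ((T.prodCongr T).image_closure U).trans (congrArg closure hUinv)
  refine ⟨hJc, hJM, hJinv, ?_, ?_⟩
  · refine hMmin _ (hJc.isCompact.image continuous_fst).isClosed
      ((hU.mono subset_closure).mono subset_union_left |>.image _)
      (image_subset_iff.mpr fun p hp => (hJM hp).1) ?_
    conv_rhs => rw [← hJinv]
    simp only [image_image, Prod.map_fst]
  · refine eq_univ_of_forall fun w => ?_
    by_cases hw : w ∈ Prod.snd '' U
    · exact image_mono (subset_closure.trans subset_union_left) hw
    · exact ⟨(m, w), Or.inr ⟨hm, hw⟩, rfl⟩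

theorem DisjointOn.prod_subset_closure (hdisj : DisjointOn T T M univ)
    (hM : IsMinimalSubset T M) (hUM : U ⊆ M ×ˢ univ) (hU : U.Nonempty)
    (hUinv : Prod.map T T '' U = U) (hUo : IsOpen (Prod.snd '' U)) :
    M ×ˢ (Prod.snd '' U) ⊆ closure U := by
  intro p hp
  have hpJ : p ∈ closure U ∪ M ×ˢ (Prod.snd '' U)ᶜ := by
    rw [hdisj _ (isJoiningOn_closure_union_prod_compl hM hUM hU hUinv hUo)]
    exact ⟨hp.1, trivial⟩
  exact hpJ.resolve_right fun h => h.2 hp.2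

end Joining

section MinimalDisjoint

variable {X : Type*} [MetricSpace X] [CompactSpace X] {T : X ≃ₜ X} {M : Set X}

theorem exists_hIter_near_of_mem_thickening (hM : IsMinimalSubset T M)
    (hdisj : DisjointOn T T M univ) {e η : ℝ} (hη : 0 < η) {a x : X} (ha : a ∈ M)
    (hx : x ∈ thickening e M) :
    ∃ (n : ℤ) (p r : X), dist r p < e ∧ dist (hIter T n p) a < η ∧
      dist (hIter T n r) x < η := by
  set C : Set (X × X) := {c | c.1 ∈ M ∧ dist c.2 c.1 < e}
  set U : Set (X × X) := ⋃ n : ℤ, Prod.map (hIter T n) (hIter T n) '' C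
  have hUM : U ⊆ M ×ˢ univ := by
    refine iUnion_subset fun n => ?_
    rintro _ ⟨c, hc, rfl⟩
    exact ⟨hIter_mem_of_image_eq hM.2.2.1 n hc.1, trivial⟩
  have hsndU : Prod.snd '' U = ⋃ n : ℤ, hIter T n '' thickening e M := by
    have hsndC : Prod.snd '' C = thickening e M := by
      ext w
      rw [mem_thickening_iff]
      exact ⟨fun ⟨c, hc, hw⟩ => ⟨c.1, hc.1, hw ▸ hc.2⟩, fun ⟨z, hz, hw⟩ => ⟨(z, w), ⟨hz, hw⟩, rfl⟩⟩
    simp_rw [U, image_iUnion, image_image, Prod.map_snd, ← hsndC, image_image]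
  have hUinv : Prod.map T T '' U = U := by
    refine image_iUnion_image_eq_of_comp_eq (fun n => ?_) C
    simp only [hIter_eq_coe_zpow, add_comm n 1, zpow_one_add]
    rfl
  have hUo : IsOpen (Prod.snd '' U) := by
    rw [hsndU]
    exact isOpen_iUnion fun n => hIter_eq_coe_zpow T n ▸ (T ^ n).isOpenMap _ isOpen_thickening
  obtain ⟨z, hz, hxz⟩ := mem_thickening_iff.mp hx
  have hzxU : (z, x) ∈ U :=
    mem_iUnion.mpr ⟨0, (z, x), ⟨hz, hxz⟩, by rw [hIter_zero, Prod.map_id, id]⟩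
  have haxU : (a, x) ∈ closure U :=
    hdisj.prod_subset_closure hM hUM ⟨_, hzxU⟩ hUinv hUo ⟨ha, _, hzxU, rfl⟩
  obtain ⟨_, hcU, hcd⟩ := Metric.mem_closure_iff.mp haxU η hη
  obtain ⟨n, ⟨p, r⟩, ⟨-, hrp⟩, rfl⟩ := mem_iUnion.mp hcU
  rw [Prod.dist_eq, max_lt_iff] at hcd
  exact ⟨n, p, r, hrp, by rw [dist_comm]; exact hcd.1, by rw [dist_comm]; exact hcd.2⟩

end MinimalDisjoint

section RegionalProximality

variable {X : Type*} [MetricSpace X] {T : X ≃ₜ X}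

theorem rpPair_iff_forall_exists {a b : X} :
    RPpair T a b ↔ ∀ ε > 0, ∃ (u v : X) (n : ℤ),
      dist u a < ε ∧ dist v b < ε ∧ dist (hIter T n u) (hIter T n v) < ε := by
  constructor
  · rintro ⟨u, v, n, hu, hv, huv⟩ ε hε
    obtain ⟨i, hi⟩ := ((hu.eventually (ball_mem_nhds a hε)).and
      ((hv.eventually (ball_mem_nhds b hε)).and (huv.eventually (gt_mem_nhds hε)))).exists
    exact ⟨u i, v i, n i, hi⟩
  · intro h
    choose u v n hu hv huv using fun k : ℕ => h (1 / (k + 1)) Nat.one_div_pos_of_nat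
    have hlim := tendsto_one_div_add_atTop_nhds_zero_nat (𝕜 := ℝ)
    refine ⟨u, v, n, ?_, ?_, ?_⟩
    · exact tendsto_iff_dist_tendsto_zero.mpr
        (squeeze_zero (fun _ => dist_nonneg) (fun k => (hu k).le) hlim)
    · exact tendsto_iff_dist_tendsto_zero.mpr
        (squeeze_zero (fun _ => dist_nonneg) (fun k => (hv k).le) hlim)
    · exact squeeze_zero (fun _ => dist_nonneg) (fun k => (huv k).le) hlim

theorem isClosed_setOf_rpPair : IsClosed {p : X × X | RPpair T p.1 p.2} := by
  refine closure_subset_iff_isClosed.mp fun p hp => rpPair_iff_forall_exists.mpr fun ε hε => ?_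
  obtain ⟨p', hp', hpp'⟩ := Metric.mem_closure_iff.mp hp (ε / 2) (half_pos hε)
  obtain ⟨u, v, n, hu, hv, huv⟩ := rpPair_iff_forall_exists.mp hp' (ε / 2) (half_pos hε)
  rw [Prod.dist_eq, max_lt_iff] at hpp'
  refine ⟨u, v, n, ?_, ?_, huv.trans (half_lt_self hε)⟩
  · linarith [dist_triangle u p'.1 p.1, dist_comm p.1 p'.1]
  · linarith [dist_triangle v p'.2 p.2, dist_comm p.2 p'.2]

end RegionalProximality

section DenseMinimal

variable {X : Type*} [MetricSpace X] [CompactSpace X] {T : X ≃ₜ X} {Xi : ℕ → Set X}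

theorem rpPair_hIter_of_dense_minimal_disjoint (hmin : ∀ i, IsMinimalSubset T (Xi i))
    (hdense : Dense (⋃ i, Xi i)) (hdisj : ∀ i, DisjointOn T T (Xi i) univ) (x : X) (q : ℤ) :
    RPpair T x (hIter T q x) := by
  refine rpPair_iff_forall_exists.mpr fun ε hε => ?_
  obtain ⟨δ, hδ, hTq⟩ := Metric.uniformContinuous_iff.mp
    (CompactSpace.uniformContinuous_of_continuous (T ^ q).continuous) (ε / 2) (half_pos hε)
  obtain ⟨m, hmU, hxm⟩ := Metric.mem_closure_iff.mp (hdense x) (min δ (ε / 2)) (by positivity)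
  obtain ⟨i, hm⟩ := mem_iUnion.mp hmU
  rw [lt_min_iff] at hxm
  obtain ⟨n, p, r, hrp, hp, hr⟩ := exists_hIter_near_of_mem_thickening (hmin i) (hdisj i)
    (half_pos hε) (hIter_mem_of_image_eq (hmin i).2.2.1 q hm)
    (mem_thickening_iff.mpr ⟨m, hm, hxm.2⟩)
  have hqmx : dist (hIter T q m) (hIter T q x) < ε / 2 := by
    rw [hIter_eq_coe_zpow, dist_comm]
    exact hTq hxm.1
  refine ⟨hIter T n r, hIter T n p, -n, hr.trans (half_lt_self hε), ?_, ?_⟩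
  · linarith [dist_triangle (hIter T n p) (hIter T q m) (hIter T q x)]
  · rw [hIter_neg_apply_hIter, hIter_neg_apply_hIter]
    exact hrp.trans (half_lt_self hε)

theorem orbCl_prod_orbCl_subset_rpPair (hmin : ∀ i, IsMinimalSubset T (Xi i))
    (hdense : Dense (⋃ i, Xi i)) (hdisj : ∀ i, DisjointOn T T (Xi i) univ) (x : X) :
    orbCl T x ×ˢ orbCl T x ⊆ {p : X × X | RPpair T p.1 p.2} := by
  rw [orbCl, ← closure_prod_eq]
  refine closure_minimal ?_ isClosed_setOf_rpPair
  rintro ⟨_, _⟩ ⟨⟨s, rfl⟩, ⟨t, rfl⟩⟩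
  have h := rpPair_hIter_of_dense_minimal_disjoint hmin hdense hdisj (hIter T s x) (t - s)
  rwa [← hIter_add_apply, sub_add_cancel] at h

end DenseMinimal

theorem eq_of_rpPair_of_semiconj_equicontinuous {X Z : Type*} [MetricSpace X] [CompactSpace X]
    [MetricSpace Z] {T : X ≃ₜ X} {R : Z ≃ₜ Z} {φ : X → Z} (hφc : Continuous φ)
    (hφT : ∀ x, φ (T x) = R (φ x))
    (hR : ∀ ε > (0 : ℝ), ∃ δ > (0 : ℝ), ∀ z w : Z, dist z w < δ →
      ∀ n : ℤ, dist (hIter R n z) (hIter R n w) < ε)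
    {a b : X} (hab : RPpair T a b) : φ a = φ b := by
  obtain ⟨u, v, n, hu, hv, huv⟩ := hab
  refine eq_of_forall_dist_le fun ε hε => ?_
  obtain ⟨δ, hδ, hRδ⟩ := hR ε hε
  obtain ⟨δ', hδ', hφδ'⟩ := Metric.uniformContinuous_iff.mp
    (CompactSpace.uniformContinuous_of_continuous hφc) δ hδ
  refine le_of_tendsto ((hφc.tendsto a).comp hu |>.dist ((hφc.tendsto b).comp hv)) ?_
  filter_upwards [huv.eventually (gt_mem_nhds hδ')] with i hi
  have h := hRδ _ _ (hφδ' hi) (-n i)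
  rw [← map_hIter_of_semiconj hφT, ← map_hIter_of_semiconj hφT, hIter_neg_apply_hIter,
    hIter_neg_apply_hIter] at h
  exact h.le

/-- Suppose (X,T) admits minimal subsystems Xᵢ (i ∈ ℕ) with dense union, each disjoint
from (X,T). Then for every x, cl O(x,T) × cl O(x,T) ⊆ Q(X); consequently the maximal
equicontinuous factor of (X,T) consists solely of fixed points (equivalently, every
equicontinuous factor of (X,T) consists of fixed points). -/
theorem stmt_19 {X : Type u} [MetricSpace X] [CompactSpace X] (T : X ≃ₜ X)
    (Xi : ℕ → Set X) (hmin : ∀ i, IsMinimalSubset T (Xi i))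
    (hdense : Dense (⋃ i, Xi i))
    (hdisj : ∀ i, DisjointOn (⇑T) (⇑T) (Xi i) Set.univ) :
    (∀ x : X, orbCl T x ×ˢ orbCl T x ⊆ {p : X × X | RPpair T p.1 p.2}) ∧
    (∀ (Z : Type u) [MetricSpace Z] [CompactSpace Z] (R : Z ≃ₜ Z) (φ : X → Z),
      Continuous φ → Function.Surjective φ → (∀ x, φ (T x) = R (φ x)) →
      (∀ ε > (0 : ℝ), ∃ δ > (0 : ℝ), ∀ z w : Z, dist z w < δ →
        ∀ n : ℤ, dist (hIter R n z) (hIter R n w) < ε) →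
      ∀ z : Z, R z = z) := by
  have hQ := orbCl_prod_orbCl_subset_rpPair hmin hdense hdisj
  refine ⟨hQ, fun Z _ _ R φ hφc hφs hφT hR z => ?_⟩
  obtain ⟨x, rfl⟩ := hφs z
  have hx : (x, T x) ∈ orbCl T x ×ˢ orbCl T x :=
    ⟨subset_closure ⟨0, congrFun (hIter_zero T) x⟩, subset_closure ⟨1, congrFun (hIter_one T) x⟩⟩
  rw [← hφT]
  exact (eq_of_rpPair_of_semiconj_equicontinuous hφc hφT hR (hQ x hx)).symm
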